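/- Let z ∈ ℂ with z ∉ (-∞,0] and z ≠ 1, and let a ∈ ℂ. Then the Maclaurin coefficients C_n(z,a) of x ↦ f(z,x,a) satisfy C_0(z,a) = (1 − z^{1−a})/(1 − z) and, for every n ≥ 1, the recurrence C_n(z,a) = (z/(1−z)) [ Σ_{k=0}^{n−1} ((−1)^{n−k}/(n−k)!) C_k(z,a) − (a−1)^n/(n! z^a) ], where z^{1−a} and z^a are principal powers. -/

import Mathlib

open scoped BigOperators

/-- `f(z,x,a) = (1 - (z e^{-x})^{1-a})/(1 - z e^{-x})`, with the removable singularity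
(where `z e^{-x} = 1`) filled by the limiting value `1 - a`.  Principal powers. -/
noncomputable def lerchF (z a x : ℂ) : ℂ :=
  if z * Complex.exp (-x) = 1 then 1 - a
  else (1 - (z * Complex.exp (-x)) ^ ((1 : ℂ) - a)) / (1 - z * Complex.exp (-x))

/-- The `n`-th Maclaurin (Taylor at `0`) coefficient of `g`. -/
noncomputable def taylorCoeff (g : ℂ → ℂ) (n : ℕ) : ℂ :=
  iteratedDeriv n g 0 / (n.factorial : ℂ)

/-! Near `x = 0` the principal branch satisfies `(z e^{-x})^{1-a} = z^{1-a} e^{(a-1)x}`, so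
`f(z,x,a) (1 - z e^{-x}) = 1 - z^{1-a} e^{(a-1)x}` there. Both factors on the left are smooth
at `0`, and comparing Maclaurin coefficients through the Leibniz rule gives `C_0` and the
recurrence. -/

open Complex Filter Topology
open scoped Nat

lemma taylorCoeff_congr {f g : ℂ → ℂ} (h : f =ᶠ[𝓝 0] g) (n : ℕ) :
    taylorCoeff f n = taylorCoeff g n := by
  rw [taylorCoeff, taylorCoeff, h.iteratedDeriv_eq]

lemma taylorCoeff_mul {f g : ℂ → ℂ} {n : ℕ} (hf : ContDiffAt ℂ n f 0) (hg : ContDiffAt ℂ n g 0) :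
    taylorCoeff (f * g) n
      = ∑ k ∈ Finset.range (n + 1), taylorCoeff f k * taylorCoeff g (n - k) := by
  rw [taylorCoeff, iteratedDeriv_mul hf hg, Finset.sum_div]
  refine Finset.sum_congr rfl fun k hk => ?_
  rw [taylorCoeff, taylorCoeff, Nat.cast_choose ℂ (Finset.mem_range_succ_iff.mp hk)]
  have : (n ! : ℂ) ≠ 0 := mod_cast n.factorial_ne_zero
  field_simp

lemma taylorCoeff_const_sub_mul_cexp (u v c : ℂ) (n : ℕ) :
    taylorCoeff (fun x => u - v * exp (c * x)) n = (if n = 0 then u else 0) - v * c ^ n / n ! := by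
  rcases n with _ | n
  · simp [taylorCoeff]
  · rw [taylorCoeff, iteratedDeriv_const_sub n.succ_pos]
    simp [neg_div, mul_div_assoc]

lemma log_mul_cexp_eventuallyEq {z : ℂ} (hz : z ∈ slitPlane) :
    (fun x => log (z * exp x)) =ᶠ[𝓝 0] fun x => log z + x := by
  have him : (log z + 0).im ∈ Set.Ioo (-Real.pi) Real.pi := by
    simpa [log_im] using ⟨neg_pi_lt_arg z, (arg_le_pi z).lt_of_ne (slitPlane_arg_ne_pi hz)⟩
  have hev : ∀ᶠ x in 𝓝 (0 : ℂ), (log z + x).im ∈ Set.Ioo (-Real.pi) Real.pi :=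
    (continuous_im.comp (continuous_const.add continuous_id)).continuousAt.eventually_mem
      (isOpen_Ioo.mem_nhds him)
  filter_upwards [hev] with x hx
  rw [← exp_log (slitPlane_ne_zero hz), ← exp_add, log_exp hx.1 hx.2.le,
    exp_log (slitPlane_ne_zero hz)]

lemma mul_cexp_cpow_eventuallyEq {z : ℂ} (hz : z ∈ slitPlane) (b : ℂ) :
    (fun x => (z * exp x) ^ b) =ᶠ[𝓝 0] fun x => z ^ b * exp (b * x) := by
  filter_upwards [log_mul_cexp_eventuallyEq hz] with x hx
  rw [cpow_def_of_ne_zero (mul_ne_zero (slitPlane_ne_zero hz) (exp_ne_zero x)), hx,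
    cpow_def_of_ne_zero (slitPlane_ne_zero hz), ← exp_add, add_mul, mul_comm x]

section Lerch

variable {z : ℂ} (a : ℂ)

lemma lerchF_eventuallyEq_div (hz : z ∈ slitPlane) (hz1 : z ≠ 1) :
    lerchF z a =ᶠ[𝓝 0]
      fun x => (1 - z ^ (1 - a) * exp ((a - 1) * x)) / (1 - z * exp (-1 * x)) := by
  have hne : ∀ᶠ x in 𝓝 (0 : ℂ), z * exp (-x) ≠ 1 :=
    (by fun_prop : ContinuousAt (fun x : ℂ => z * exp (-x)) 0).eventually_ne (by simpa using hz1)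
  have hpow := (mul_cexp_cpow_eventuallyEq hz (1 - a)).comp_tendsto
    (continuous_neg.tendsto' 0 0 neg_zero)
  filter_upwards [hne, hpow] with x hx hxpow
  have hxpow : (z * exp (-x)) ^ (1 - a) = z ^ (1 - a) * exp ((1 - a) * -x) := hxpow
  rw [lerchF, if_neg hx, hxpow, neg_one_mul]
  ring_nf

lemma contDiffAt_lerchF (hz : z ∈ slitPlane) (hz1 : z ≠ 1) {n : WithTop ℕ∞} :
    ContDiffAt ℂ n (lerchF z a) 0 := by
  refine ContDiffAt.congr_of_eventuallyEq ?_ (lerchF_eventuallyEq_div a hz hz1)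
  exact ContDiffAt.div (by fun_prop) (by fun_prop) (by simpa [sub_eq_zero] using hz1.symm)

lemma lerchF_mul_eventuallyEq (hz : z ∈ slitPlane) (hz1 : z ≠ 1) :
    lerchF z a * (fun x => 1 - z * exp (-1 * x)) =ᶠ[𝓝 0]
      fun x => 1 - z ^ (1 - a) * exp ((a - 1) * x) := by
  have hden : ∀ᶠ x in 𝓝 (0 : ℂ), 1 - z * exp (-1 * x) ≠ 0 :=
    (by fun_prop : ContinuousAt (fun x : ℂ => 1 - z * exp (-1 * x)) 0).eventually_ne
      (by simpa [sub_eq_zero] using hz1.symm)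
  filter_upwards [lerchF_eventuallyEq_div a hz hz1, hden] with x hx hd
  rw [Pi.mul_apply, hx, div_mul_cancel₀ _ hd]

lemma taylorCoeff_lerchF_convolution (hz : z ∈ slitPlane) (hz1 : z ≠ 1) (n : ℕ) :
    ∑ k ∈ Finset.range (n + 1), taylorCoeff (lerchF z a) k
        * ((if n - k = 0 then 1 else 0) - z * (-1) ^ (n - k) / (n - k)!)
      = (if n = 0 then 1 else 0) - z ^ (1 - a) * (a - 1) ^ n / n ! := by
  rw [← taylorCoeff_const_sub_mul_cexp, ← taylorCoeff_congr (lerchF_mul_eventuallyEq a hz hz1),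
    taylorCoeff_mul (contDiffAt_lerchF a hz hz1) (by fun_prop)]
  simp only [taylorCoeff_const_sub_mul_cexp]

lemma taylorCoeff_lerchF_mul_one_sub (hz : z ∈ slitPlane) (hz1 : z ≠ 1) {n : ℕ} (hn : n ≠ 0) :
    taylorCoeff (lerchF z a) n * (1 - z)
      = z * ∑ k ∈ Finset.range n, (-1) ^ (n - k) / (n - k)! * taylorCoeff (lerchF z a) k
        - z ^ (1 - a) * (a - 1) ^ n / n ! := by
  have h := taylorCoeff_lerchF_convolution a hz hz1 n
  have hsum : ∑ k ∈ Finset.range n, taylorCoeff (lerchF z a) k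
      * ((if n - k = 0 then 1 else 0) - z * (-1) ^ (n - k) / (n - k)!)
      = -z * ∑ k ∈ Finset.range n, (-1) ^ (n - k) / (n - k)! * taylorCoeff (lerchF z a) k := by
    rw [Finset.mul_sum]
    refine Finset.sum_congr rfl fun k hk => ?_
    rw [if_neg (by have := Finset.mem_range.1 hk; omega)]
    ring
  rw [Finset.sum_range_succ, hsum, if_neg hn] at h
  simp only [Nat.sub_self, if_true, pow_zero, Nat.factorial_zero, Nat.cast_one, div_one] at h
  linear_combination h

end Lerch

theorem stmt2 (z a : ℂ) (hz : ∀ x : ℝ, x ≤ 0 → z ≠ (x : ℂ)) (hz1 : z ≠ 1) :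
    taylorCoeff (lerchF z a) 0 = (1 - z ^ ((1 : ℂ) - a)) / (1 - z) ∧
    ∀ n : ℕ, 1 ≤ n →
      taylorCoeff (lerchF z a) n
        = z / (1 - z) *
            (∑ k ∈ Finset.range n,
                ((-1 : ℂ) ^ (n - k) / ((n - k).factorial : ℂ)) * taylorCoeff (lerchF z a) k
              - (a - 1) ^ n / ((n.factorial : ℂ) * z ^ a)) := by
  have hslit : z ∈ slitPlane := mem_slitPlane_iff_not_le_zero.2 fun h =>
    hz z.re (le_def.1 h).1 (Complex.ext rfl (by simpa using (le_def.1 h).2))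
  have hz0 : z ≠ 0 := slitPlane_ne_zero hslit
  have h1z : 1 - z ≠ 0 := sub_ne_zero.2 hz1.symm
  have hw : z ^ (1 - a) = z / z ^ a := by rw [cpow_sub _ _ hz0, cpow_one]
  refine ⟨?_, fun n hn => ?_⟩
  · have h := taylorCoeff_lerchF_convolution a hslit hz1 0
    simp only [zero_add, Finset.sum_range_one, Nat.sub_self, if_true, pow_zero, Nat.factorial_zero,
      Nat.cast_one, div_one, mul_one] at h
    rw [eq_div_iff h1z]
    linear_combination h
  · rw [div_mul_eq_mul_div, eq_div_iff h1z,
      taylorCoeff_lerchF_mul_one_sub a hslit hz1 (by omega : n ≠ 0), hw]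
    ring
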